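/- Let P = ⊕_{i=1}^n P_i be a finite-dimensional left Λ-module with a fixed direct sum decomposition, with canonical injections ι_i : P_i → P and projections π_i : P → P_i, and let h : P → JP be a Λ-homomorphism. Then there exist Λ-homomorphisms ψ, χ : P → JP such that ψ(P_i) ⊆ P_i for all i, π_i ∘ χ ∘ ι_i = 0 for all i, and id_P + h = (id_P + ψ) ∘ (id_P + χ) as endomorphisms of P. -/

import Mathlib

/-! Since `Λ` is finite-dimensional it is Artinian, so `J` is nilpotent; an endomorphism with
image in `J•M` therefore maps `J^k•M` into `J^(k+1)•M`, is nilpotent, and adding the identity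
gives an automorphism. Let `ψ` be the block-diagonal part of `h`. Each block of `id + ψ` is such an
automorphism, so `id + ψ` has a block-diagonal right inverse `D`, and `χ = D (h - ψ)` satisfies
`(id + ψ)(id + χ) = id + ψ + (h - ψ) = id + h`. The diagonal blocks of `χ` vanish because `D` is
block-diagonal and `h - ψ` has zero diagonal blocks. -/

open Submodule

/-- The submodule `J•M` of `M`, where `J` is the Jacobson radical of `Λ`. -/
def radsub (Λ : Type) [Ring Λ] (M : Type) [AddCommGroup M] [Module Λ M] :
    Submodule Λ M :=
  Submodule.span Λ {x : M | ∃ a ∈ (⊥ : Ideal Λ).jacobson, ∃ m : M, x = a • m}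

/-- Riedtmann–Zwara: `N` is a degeneration of `M` if there is a short exact sequence
`0 → Z → Z ⊕ M → N → 0` for some finite `Λ`-module `Z`. -/
def IsDegeneration (Λ : Type) [Ring Λ] (M N : Type) [AddCommGroup M] [Module Λ M]
    [AddCommGroup N] [Module Λ N] : Prop :=
  ∃ (Z : Type) (_ : AddCommGroup Z) (_ : Module Λ Z) (_ : Module.Finite Λ Z)
    (f : Z →ₗ[Λ] Z × M) (g : Z × M →ₗ[Λ] N),
      Function.Injective f ∧ Function.Surjective g ∧
        LinearMap.range f = LinearMap.ker g

/-- A degeneration is top-stable if it has the same top `M/JM`. -/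
def IsTopStableDegeneration (Λ : Type) [Ring Λ] (M N : Type) [AddCommGroup M] [Module Λ M]
    [AddCommGroup N] [Module Λ N] : Prop :=
  IsDegeneration Λ M N ∧
    Nonempty ((N ⧸ radsub Λ N) ≃ₗ[Λ] (M ⧸ radsub Λ M))

/-- `M` has no proper top-stable degeneration. -/
def HasNoProperTopStableDegeneration (Λ : Type) [Ring Λ] (M : Type) [AddCommGroup M]
    [Module Λ M] : Prop :=
  ∀ (N : Type) (_ : AddCommGroup N) (_ : Module Λ N) (_ : Module.Finite Λ N),
    IsTopStableDegeneration Λ M N → Nonempty (N ≃ₗ[Λ] M)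

/-- The left ideal `Λx` as a submodule of `Λ`. -/
def Pe (Λ : Type) [Ring Λ] (x : Λ) : Submodule Λ Λ := Submodule.span Λ {x}

/-- The left ideal `Jx` as a submodule of `Λ`. -/
def Je (Λ : Type) [Ring Λ] (x : Λ) : Submodule Λ Λ :=
  Submodule.span Λ {y : Λ | ∃ a ∈ (⊥ : Ideal Λ).jacobson, y = a * x}

open LinearMap

section Radical

variable {Λ : Type} [Ring Λ]

theorem radsub_eq_jacobson_smul_top (M : Type) [AddCommGroup M] [Module Λ M] :
    radsub Λ M = (⊥ : Ideal Λ).jacobson • (⊤ : Submodule Λ M) :=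
  le_antisymm (span_le.2 fun _ ⟨_, ha, _, hx⟩ => hx ▸ smul_mem_smul ha mem_top)
    (smul_le.2 fun a ha m _ => subset_span ⟨a, ha, m, rfl⟩)

variable {M N : Type} [AddCommGroup M] [Module Λ M] [AddCommGroup N] [Module Λ N]

theorem map_radsub_le (f : M →ₗ[Λ] N) : (radsub Λ M).map f ≤ radsub Λ N := by
  rw [radsub_eq_jacobson_smul_top, radsub_eq_jacobson_smul_top, map_smul'']
  exact smul_mono_right _ le_top

theorem range_comp_le_radsub {L : Type} [AddCommGroup L] [Module Λ L] {f : L →ₗ[Λ] M}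
    (hf : range f ≤ radsub Λ M) (g : M →ₗ[Λ] N) : range (g ∘ₗ f) ≤ radsub Λ N :=
  range_comp f g ▸ (map_mono hf).trans (map_radsub_le g)

theorem range_piMap_le_radsub {ι : Type} [Fintype ι] [DecidableEq ι] {M N : ι → Type}
    [∀ i, AddCommGroup (M i)] [∀ i, Module Λ (M i)] [∀ i, AddCommGroup (N i)]
    [∀ i, Module Λ (N i)] {f : ∀ i, M i →ₗ[Λ] N i} (hf : ∀ i, range (f i) ≤ radsub Λ (N i)) :
    range (piMap f) ≤ radsub Λ (∀ i, N i) := by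
  rintro _ ⟨x, rfl⟩
  rw [← Finset.univ_sum_single (piMap f x)]
  exact sum_mem fun i _ => map_radsub_le (single Λ N i) ⟨f i (x i), hf i ⟨x i, rfl⟩, rfl⟩

theorem range_pow_le_pow_smul_top {I : Ideal Λ} {f : Module.End Λ M}
    (hf : range f ≤ I • ⊤) (k : ℕ) : range (f ^ k) ≤ I ^ k • ⊤ := by
  induction k with
  | zero => simp [Module.End.one_eq_id, Submodule.pow_zero]
  | succ k ih =>
    rw [pow_succ', Module.End.mul_eq_comp, range_comp, Submodule.pow_succ, Submodule.mul_smul]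
    calc map f (range (f ^ k)) ≤ map f (I ^ k • ⊤) := map_mono ih
      _ = I ^ k • range f := by rw [map_smul'', Submodule.map_top]
      _ ≤ I ^ k • I • ⊤ := smul_mono_right _ hf

theorem isNilpotent_of_range_le_smul_top {I : Ideal Λ} (hI : IsNilpotent I)
    {f : Module.End Λ M} (hf : range f ≤ I • ⊤) : IsNilpotent f := by
  obtain ⟨k, hk⟩ := hI
  refine ⟨k, range_eq_bot.1 (eq_bot_iff.2 ?_)⟩
  simpa [hk] using range_pow_le_pow_smul_top hf k

theorem isUnit_one_add_of_range_le_radsub [IsArtinianRing Λ] {f : Module.End Λ M}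
    (hf : range f ≤ radsub Λ M) : IsUnit (1 + f) :=
  (isNilpotent_of_range_le_smul_top IsArtinianRing.isNilpotent_jacobson_bot
    (radsub_eq_jacobson_smul_top (Λ := Λ) M ▸ hf)).isUnit_one_add

end Radical

theorem one_add_eq_mul_one_add_mul_sub {R : Type*} [Ring R] {ψ d : R} (hd : (1 + ψ) * d = 1)
    (h : R) : 1 + h = (1 + ψ) * (1 + d * (h - ψ)) := by
  rw [mul_add, ← mul_assoc, hd]
  noncomm_ring

section BlockDiagonal

variable {R ι : Type} [Ring R] [DecidableEq ι] {M : ι → Type} [∀ i, AddCommGroup (M i)]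
  [∀ i, Module R (M i)]

def diagBlock (h : Module.End R (∀ i, M i)) (i : ι) : Module.End R (M i) :=
  proj i ∘ₗ h ∘ₗ single R M i

def blockDiagonal (h : Module.End R (∀ i, M i)) : Module.End R (∀ i, M i) :=
  piMap (diagBlock h)

theorem blockDiagonal_comp_single (h : Module.End R (∀ i, M i)) (i : ι) :
    blockDiagonal h ∘ₗ single R M i = single R M i ∘ₗ diagBlock h i := by
  ext x j
  exact Pi.apply_single (fun i => diagBlock h i) (fun i => map_zero _) i x j

theorem map_blockDiagonal_range_single_le (h : Module.End R (∀ i, M i)) (i : ι) :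
    map (blockDiagonal h) (range (single R M i)) ≤ range (single R M i) := by
  rw [← range_comp, blockDiagonal_comp_single, range_comp]
  exact map_le_range

theorem diagBlock_sub_blockDiagonal (h : Module.End R (∀ i, M i)) (i : ι) :
    diagBlock (h - blockDiagonal h) i = 0 := by
  rw [diagBlock, sub_comp, comp_sub, blockDiagonal_comp_single, ← comp_assoc (diagBlock h i),
    proj_comp_single_same, id_comp]
  exact sub_self _

theorem one_add_blockDiagonal_mul_piMap {h : Module.End R (∀ i, M i)}
    {g : ∀ i, Module.End R (M i)} (hg : ∀ i, (1 + diagBlock h i) * g i = 1) :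
    (1 + blockDiagonal h) * piMap g = 1 := by
  ext x i
  simpa [blockDiagonal] using congr($(hg i) (x i))

end BlockDiagonal

theorem factor_unipotent_automorphism_general
    (K : Type) [Field K]
    (Λ : Type) [Ring Λ] [Algebra K Λ] [FiniteDimensional K Λ]
    (n : ℕ) (Pmod : Fin n → Type)
    [∀ i, AddCommGroup (Pmod i)] [∀ i, Module Λ (Pmod i)]
    (h : (∀ i, Pmod i) →ₗ[Λ] (∀ i, Pmod i))
    (hh : LinearMap.range h ≤ radsub Λ (∀ i, Pmod i)) :
    ∃ ψ χ : (∀ i, Pmod i) →ₗ[Λ] (∀ i, Pmod i),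
      LinearMap.range ψ ≤ radsub Λ (∀ i, Pmod i) ∧
      LinearMap.range χ ≤ radsub Λ (∀ i, Pmod i) ∧
      -- `ψ(P_i) ⊆ P_i`
      (∀ i, Submodule.map ψ (LinearMap.range (LinearMap.single Λ Pmod i)) ≤
        LinearMap.range (LinearMap.single Λ Pmod i)) ∧
      -- `π_i ∘ χ ∘ ι_i = 0`
      (∀ i, (LinearMap.proj i : (∀ i, Pmod i) →ₗ[Λ] Pmod i).comp
        (χ.comp (LinearMap.single Λ Pmod i)) = 0) ∧
      LinearMap.id + h = (LinearMap.id + ψ).comp (LinearMap.id + χ) := by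
  have : IsArtinianRing Λ := .of_finite K Λ
  have hdiag i : range (diagBlock h i) ≤ radsub Λ (Pmod i) :=
    range_comp_le_radsub ((range_comp_le_range _ _).trans hh) (proj i)
  have hψ := range_piMap_le_radsub hdiag
  choose g hg using fun i => (isUnit_one_add_of_range_le_radsub (hdiag i)).exists_right_inv
  refine ⟨blockDiagonal h, piMap g * (h - blockDiagonal h), hψ, ?_,
    map_blockDiagonal_range_single_le h, fun i => ?_,
    one_add_eq_mul_one_add_mul_sub (one_add_blockDiagonal_mul_piMap hg) h⟩
  · refine range_comp_le_radsub ?_ (piMap g)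
    rintro _ ⟨x, rfl⟩
    exact sub_mem (hh ⟨x, rfl⟩) (hψ ⟨x, rfl⟩)
  · show g i ∘ₗ diagBlock (h - blockDiagonal h) i = 0
    rw [diagBlock_sub_blockDiagonal, comp_zero]

/-- The factorization `id + h = (id + ψ)(id + χ)` from the proof of Lemma 3.7, where
`ψ` preserves each canonical summand and `χ` has vanishing diagonal components. -/
theorem factor_unipotent_automorphism
    (K : Type) [Field K] [IsAlgClosed K]
    (Λ : Type) [Ring Λ] [Algebra K Λ] [FiniteDimensional K Λ]
    (n : ℕ) (Pmod : Fin n → Type)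
    [∀ i, AddCommGroup (Pmod i)] [∀ i, Module Λ (Pmod i)] [∀ i, Module.Finite Λ (Pmod i)]
    (h : (∀ i, Pmod i) →ₗ[Λ] (∀ i, Pmod i))
    (hh : LinearMap.range h ≤ radsub Λ (∀ i, Pmod i)) :
    ∃ ψ χ : (∀ i, Pmod i) →ₗ[Λ] (∀ i, Pmod i),
      LinearMap.range ψ ≤ radsub Λ (∀ i, Pmod i) ∧
      LinearMap.range χ ≤ radsub Λ (∀ i, Pmod i) ∧
      -- `ψ(P_i) ⊆ P_i`
      (∀ i, Submodule.map ψ (LinearMap.range (LinearMap.single Λ Pmod i)) ≤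
        LinearMap.range (LinearMap.single Λ Pmod i)) ∧
      -- `π_i ∘ χ ∘ ι_i = 0`
      (∀ i, (LinearMap.proj i : (∀ i, Pmod i) →ₗ[Λ] Pmod i).comp
        (χ.comp (LinearMap.single Λ Pmod i)) = 0) ∧
      LinearMap.id + h = (LinearMap.id + ψ).comp (LinearMap.id + χ) :=
  factor_unipotent_automorphism_general K Λ n Pmod h hh
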